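/- arXiv:2503.05521 — 4 statements merged into one kernel-verified Lean document; each statement's English description precedes it below -/
import Mathlib

section
/- Along a geodesic γ = (α, β) in a smooth warped product B ×_f F, the quantity (f∘α)^4 · g_F(β', β') is constant in the parameter; equivalently, (f∘α)^2 · ⟨β', β'⟩ (the warped metric length squared of the fiber component) is constant. -/
/-! The ODE `β'' = -2 (h'/h) β'` says exactly that `(h² β')' = 2 h h' β' + h² β'' = 0`, so the
vector `h² β'` is constant along the geodesic, and with it `h⁴ ⟪β', β'⟫ = ⟪h² β', h² β'⟫`. -/

open InnerProductSpace

theorem hasDerivAt_sq_smul_eq_zero_of_hasDerivAt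
    {E : Type*} [NormedAddCommGroup E] [NormedSpace ℝ E]
    {h : ℝ → ℝ} {v : ℝ → E} {h' : ℝ} {x : ℝ}
    (hh : HasDerivAt h h' x) (hv : HasDerivAt v ((-2 / h x * h') • v x) x) :
    HasDerivAt (fun u => h u ^ 2 • v u) 0 x := by
  refine ((hh.pow 2).smul hv).congr_deriv ?_
  rw [Pi.pow_apply, smul_smul, ← add_smul]
  convert zero_smul ℝ (v x) using 2
  -- `h² · (-2 / h) = -2 h` holds at `h = 0` as well, since `0⁻¹ = 0`.
  field_simp
  ring

theorem sq_smul_deriv_const_of_ode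
    {E : Type*} [NormedAddCommGroup E] [NormedSpace ℝ E]
    {h : ℝ → ℝ} {β : ℝ → E} (hdiff : Differentiable ℝ h)
    (hβ2 : Differentiable ℝ (deriv β))
    (hode : ∀ t, deriv (deriv β) t = (-2 / h t * deriv h t) • deriv β t) (s t : ℝ) :
    h s ^ 2 • deriv β s = h t ^ 2 • deriv β t := by
  have hzero : ∀ x, HasDerivAt (fun u => h u ^ 2 • deriv β u) 0 x := fun x =>
    hasDerivAt_sq_smul_eq_zero_of_hasDerivAt (hdiff x).hasDerivAt
      (hode x ▸ (hβ2 x).hasDerivAt)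
  exact is_const_of_deriv_eq_zero (fun x => (hzero x).differentiableAt)
    (fun x => (hzero x).deriv) s t

theorem pow_four_mul_real_inner_self
    {E : Type*} [NormedAddCommGroup E] [InnerProductSpace ℝ E] (c : ℝ) (v : E) :
    c ^ 4 * ⟪v, v⟫_ℝ = ⟪c ^ 2 • v, c ^ 2 • v⟫_ℝ := by
  rw [real_inner_smul_left, real_inner_smul_right]
  ring

theorem warped_product_fiber_energy_const_general
    {F : Type*} [NormedAddCommGroup F] [InnerProductSpace ℝ F]
    (h : ℝ → ℝ) (β : ℝ → F)
    (hdiff : Differentiable ℝ h)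
    (hβ2 : Differentiable ℝ (deriv β))
    (hode : ∀ t, deriv (deriv β) t = (-2 / h t * deriv h t) • deriv β t) :
    ∀ s t : ℝ,
      h s ^ 4 * (inner ℝ (deriv β s) (deriv β s) : ℝ) =
        h t ^ 4 * (inner ℝ (deriv β t) (deriv β t) : ℝ) := by
  intro s t
  have hconst := sq_smul_deriv_const_of_ode hdiff hβ2 hode s t
  rw [pow_four_mul_real_inner_self, pow_four_mul_real_inner_self, hconst]

/-- Along a geodesic `γ = (α, β)` in a warped product `B ×_f F`, the fiber component
satisfies the ODE `β'' = (-2/(f∘α)) (f∘α)' β'`.  Writing `h = f ∘ α`, the quantity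
`h⁴ ⟪β', β'⟫_F = h² ⟨β',β'⟩` (the warped metric length squared of the fiber component)
is constant in the parameter. -/
theorem warped_product_fiber_energy_const
    {F : Type*} [NormedAddCommGroup F] [InnerProductSpace ℝ F]
    (h : ℝ → ℝ) (β : ℝ → F)
    (hpos : ∀ t, 0 < h t)
    (hdiff : Differentiable ℝ h)
    (hβ1 : Differentiable ℝ β) (hβ2 : Differentiable ℝ (deriv β))
    (hode : ∀ t, deriv (deriv β) t = (-2 / h t * deriv h t) • deriv β t) :
    ∀ s t : ℝ,
      h s ^ 4 * (inner ℝ (deriv β s) (deriv β s) : ℝ) =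
        h t ^ 4 * (inner ℝ (deriv β t) (deriv β t) : ℝ) :=
  warped_product_fiber_energy_const_general h β hdiff hβ2 hode
end

section
/- Clairaut's relation: for a geodesic γ on a surface of revolution I ×_f S^1 (so γ = (α, β) with β' > 0), the product f(α(t))·cos θ(t) is constant, where θ(t) is the angle between γ'(t) and the meridian through γ(t). -/
/-! The `φ`-component of the geodesic equation, `β'' = -2 (f ∘ α)' β' / (f ∘ α)`, says exactly
that the angular momentum `(f ∘ α)² β' = (f ∘ α) cos θ` has zero derivative, so it is constant. -/

theorem hasDerivAt_sq_mul_eq_zero {g b : ℝ → ℝ} {t : ℝ}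
    (hg : DifferentiableAt ℝ g t) (hb : DifferentiableAt ℝ b t)
    (h : deriv b t = -2 / g t * deriv g t * b t) :
    HasDerivAt (fun s => g s ^ 2 * b s) 0 t := by
  refine ((hg.hasDerivAt.fun_pow 2).fun_mul hb.hasDerivAt).congr_deriv ?_
  -- This holds even where `g t = 0`, thanks to `x / 0 = 0`.
  have hcancel : g t ^ 2 * (-2 / g t) = -2 * g t := by
    rw [mul_div_left_comm, sq, mul_self_div_self]
  rw [h]
  linear_combination (deriv g t * b t) * hcancel

theorem sq_mul_eq_of_deriv_eq {g b : ℝ → ℝ} (hg : Differentiable ℝ g) (hb : Differentiable ℝ b)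
    (h : ∀ t, deriv b t = -2 / g t * deriv g t * b t) (s t : ℝ) :
    g s ^ 2 * b s = g t ^ 2 * b t :=
  is_const_of_deriv_eq_zero ((hg.pow 2).mul hb)
    (fun t => (hasDerivAt_sq_mul_eq_zero (hg t) (hb t) (h t)).deriv) s t

theorem clairaut_relation_general
    (f : ℝ → ℝ) (α β cosθ : ℝ → ℝ)
    (hfd : Differentiable ℝ f)
    (hα : Differentiable ℝ α)
    (hβ' : Differentiable ℝ (deriv β))
    (hode : ∀ t, deriv (deriv β) t =
      -2 / f (α t) * deriv (fun s => f (α s)) t * deriv β t)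
    (hcos : ∀ t, cosθ t = f (α t) * deriv β t) :
    ∀ s t : ℝ, f (α s) * cosθ s = f (α t) * cosθ t := by
  intro s t
  have hmomentum := sq_mul_eq_of_deriv_eq (hfd.comp hα) hβ' hode s t
  simp only [Function.comp_apply, hcos] at hmomentum ⊢
  linear_combination hmomentum

/-- Clairaut's relation on a surface of revolution `I ×_f S¹`: for a unit-speed geodesic
`γ = (α, β)` (in coordinates, with `β` the angular coordinate and `β' > 0`),
the quantity `f(α(t))·cos θ(t)` is constant, where `θ(t)` is the angle between `γ'(t)`
and the meridian; for a unit-speed curve `cos θ(t) = f(α(t)) β'(t)`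
(the warped inner product of `γ'` with the unit vector `∂_φ/|∂_φ|`). -/
theorem clairaut_relation
    (f : ℝ → ℝ) (α β cosθ : ℝ → ℝ)
    (hf : ∀ r, 0 < f r) (hfd : Differentiable ℝ f)
    (hα : Differentiable ℝ α) (hβ : Differentiable ℝ β)
    (hβ' : Differentiable ℝ (deriv β))
    (hβpos : ∀ t, 0 < deriv β t)
    (hunit : ∀ t, deriv α t ^ 2 + f (α t) ^ 2 * deriv β t ^ 2 = 1)
    (hode : ∀ t, deriv (deriv β) t =
      -2 / f (α t) * deriv (fun s => f (α s)) t * deriv β t)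
    (hcos : ∀ t, cosθ t = f (α t) * deriv β t) :
    ∀ s t : ℝ, f (α s) * cosθ s = f (α t) * cosθ t :=
  clairaut_relation_general f α β cosθ hfd hα hβ' hode hcos
end

section
/- The warped length functional L is lower semicontinuous with respect to pointwise convergence of admissible paths: if γₙ = (αₙ, βₙ) → γ = (α, β) pointwise on [a,b], then L(γ) ≤ liminf L(γₙ). -/
/-!
Each warped sum depends continuously on the finitely many points `γ(tᵢ)` (as `f` is
continuous), so under pointwise convergence it is the limit of the corresponding sums of the
`γₙ`, which are bounded by `L(γₙ)`. The length, a supremum of such sums, is therefore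
bounded by `liminf L(γₙ)`.
-/

/-- The warped sum of an admissible path `γ = (α, β)` over a partition `t`:
`Σᵢ (d_B(α(tᵢ₋₁),α(tᵢ))² + f(α(tᵢ))² d_F(β(tᵢ₋₁),β(tᵢ))²)^{1/2}`. -/
noncomputable def wSum {B F : Type*} [PseudoMetricSpace B] [PseudoMetricSpace F]
    (f : B → ℝ) (γ : ℝ → B × F) {n : ℕ} (t : Fin (n + 1) → ℝ) : ENNReal :=
  ∑ i : Fin n, ENNReal.ofReal
    (Real.sqrt (dist (γ (t i.castSucc)).1 (γ (t i.succ)).1 ^ 2 +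
      f (γ (t i.succ)).1 ^ 2 * dist (γ (t i.castSucc)).2 (γ (t i.succ)).2 ^ 2))

/-- The warped length of a path `γ` over `[a,b]`: the supremum of the warped sums
over all partitions `a = t₀ ≤ t₁ ≤ … ≤ t_N = b`. -/
noncomputable def wLength {B F : Type*} [PseudoMetricSpace B] [PseudoMetricSpace F]
    (f : B → ℝ) (γ : ℝ → B × F) (a b : ℝ) : ENNReal :=
  ⨆ (n : ℕ) (t : Fin (n + 1) → ℝ) (_ : Monotone t) (_ : t 0 = a)
    (_ : t (Fin.last n) = b), wSum f γ t

/-- A path in `B × F` is admissible on `[a,b]` if it is continuous and both of its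
components are rectifiable. -/
def Admissible {B F : Type*} [PseudoMetricSpace B] [PseudoMetricSpace F]
    (γ : ℝ → B × F) (a b : ℝ) : Prop :=
  ContinuousOn γ (Set.Icc a b) ∧
    eVariationOn (fun t => (γ t).1) (Set.Icc a b) < ⊤ ∧
    eVariationOn (fun t => (γ t).2) (Set.Icc a b) < ⊤

/-- The warped product (pseudo-)distance on `B × F`: the infimum of warped lengths of
admissible paths joining the two points. -/
noncomputable def wDist {B F : Type*} [PseudoMetricSpace B] [PseudoMetricSpace F]
    (f : B → ℝ) (x y : B × F) : ENNReal :=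
  ⨅ (γ : ℝ → B × F) (_ : Admissible γ 0 1) (_ : γ 0 = x) (_ : γ 1 = y),
    wLength f γ 0 1

/-- A metric space is strictly intrinsic (geodesic) if every pair of points is joined
by a minimizing geodesic, parametrized affinely on `[0,1]`. -/
def GeodesicMS (F : Type*) [PseudoMetricSpace F] : Prop :=
  ∀ x y : F, ∃ c : ℝ → F, c 0 = x ∧ c 1 = y ∧
    ∀ s t : ℝ, dist (c s) (c t) = |s - t| * dist x y

open Filter Topology

section WarpedLength

variable {B F : Type*} [PseudoMetricSpace B] [PseudoMetricSpace F]

theorem continuous_warpedSegment {f : B → ℝ} (hf : Continuous f) :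
    Continuous fun pq : (B × F) × (B × F) => ENNReal.ofReal
      (Real.sqrt (dist pq.1.1 pq.2.1 ^ 2 + f pq.2.1 ^ 2 * dist pq.1.2 pq.2.2 ^ 2)) :=
  ENNReal.continuous_ofReal.comp (by fun_prop)

theorem tendsto_wSum {ι : Type*} {l : Filter ι} {f : B → ℝ} (hf : Continuous f)
    {γn : ι → ℝ → B × F} {γ : ℝ → B × F} {n : ℕ} {t : Fin (n + 1) → ℝ}
    (hconv : ∀ i, Tendsto (fun m => γn m (t i)) l (𝓝 (γ (t i)))) :
    Tendsto (fun m => wSum f (γn m) t) l (𝓝 (wSum f γ t)) := by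
  refine tendsto_finsetSum _ fun i _ => ?_
  have hseg := (continuous_warpedSegment (F := F) hf).tendsto (γ (t i.castSucc), γ (t i.succ))
  simpa only [Function.comp_def] using
    hseg.comp ((hconv i.castSucc).prodMk_nhds (hconv i.succ))

theorem wSum_le_wLength (f : B → ℝ) (γ : ℝ → B × F) {a b : ℝ} {n : ℕ}
    {t : Fin (n + 1) → ℝ} (hmono : Monotone t) (h0 : t 0 = a) (hlast : t (Fin.last n) = b) :
    wSum f γ t ≤ wLength f γ a b :=
  le_iSup_of_le n <| le_iSup_of_le t <| le_iSup_of_le hmono <| le_iSup_of_le h0 <|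
    le_iSup_of_le hlast le_rfl

theorem mem_Icc_of_partition {a b : ℝ} {n : ℕ} {t : Fin (n + 1) → ℝ} (hmono : Monotone t)
    (h0 : t 0 = a) (hlast : t (Fin.last n) = b) (i : Fin (n + 1)) : t i ∈ Set.Icc a b :=
  ⟨h0 ▸ hmono (Fin.zero_le i), hlast ▸ hmono (Fin.le_last i)⟩

end WarpedLength

theorem warped_length_lowerSemicontinuous_general
    {B F : Type*} [MetricSpace B] [MetricSpace F]
    (f : B → ℝ) (hf : Continuous f)
    (a b : ℝ)
    (γn : ℕ → ℝ → B × F) (γ : ℝ → B × F)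
    (hconv : ∀ t ∈ Set.Icc a b,
      Filter.Tendsto (fun n => γn n t) Filter.atTop (nhds (γ t))) :
    wLength f γ a b ≤ Filter.liminf (fun n => wLength f (γn n) a b) Filter.atTop := by
  refine iSup_le fun n => iSup_le fun t => iSup_le fun hmono => iSup_le fun h0 =>
    iSup_le fun hlast => ?_
  have hsum : Tendsto (fun m => wSum f (γn m) t) atTop (𝓝 (wSum f γ t)) :=
    tendsto_wSum hf fun i => hconv _ (mem_Icc_of_partition hmono h0 hlast i)
  calc wSum f γ t = liminf (fun m => wSum f (γn m) t) atTop := hsum.liminf_eq.symm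
    _ ≤ liminf (fun m => wLength f (γn m) a b) atTop :=
      liminf_le_liminf (.of_forall fun m => wSum_le_wLength f (γn m) hmono h0 hlast)

/-- Lower semicontinuity of the warped length under pointwise convergence of
admissible paths: if `γₙ → γ` pointwise on `[a,b]`, then `L(γ) ≤ liminf L(γₙ)`. -/
theorem warped_length_lowerSemicontinuous
    {B F : Type*} [MetricSpace B] [MetricSpace F]
    (f : B → ℝ) (hf : Continuous f) (hfnn : ∀ x, 0 ≤ f x)
    (a b : ℝ) (hab : a ≤ b)
    (γn : ℕ → ℝ → B × F) (γ : ℝ → B × F)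
    (hadmn : ∀ n, Admissible (γn n) a b) (hadm : Admissible γ a b)
    (hconv : ∀ t ∈ Set.Icc a b,
      Filter.Tendsto (fun n => γn n t) Filter.atTop (nhds (γ t))) :
    wLength f γ a b ≤ Filter.liminf (fun n => wLength f (γn n) a b) Filter.atTop :=
  warped_length_lowerSemicontinuous_general f hf a b γn γ hconv
end

section
/- The parabolic cone distance formula: for a strictly intrinsic metric space F, the distance in the warped product ℝ ×_{e^x} F between (s,x) and (t,y) equals the distance in the hyperbolic plane ℍ² ≅ ℝ ×_{e^x} ℝ between (s,0) and (t, d_F(x,y)). -/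
/-!
A `1`-Lipschitz map of fibres `φ : F → F'` sends admissible paths of `B × F` to admissible
paths of `B × F'` with the same base component and does not increase warped sums, so
`wDist f (b, φ u) (b', φ v) ≤ wDist f (b, u) (b', v)`. The map `dist x : F → ℝ` gives one
inequality; the other comes from the arclength parametrization `ℝ → F` of a geodesic from
`x` to `y`, which is `1`-Lipschitz and sends `0` and `dist x y` to `x` and `y`.
-/

open scoped NNReal

section WarpedProduct

variable {B F F' : Type*} [PseudoMetricSpace B] [PseudoMetricSpace F] [PseudoMetricSpace F']

lemma wSum_le_wSum_of_dist_snd_le (f : B → ℝ) {γ : ℝ → B × F} {δ : ℝ → B × F'}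
    (hfst : ∀ u, (δ u).1 = (γ u).1) (hsnd : ∀ u v, dist (δ u).2 (δ v).2 ≤ dist (γ u).2 (γ v).2)
    {n : ℕ} (t : Fin (n + 1) → ℝ) : wSum f δ t ≤ wSum f γ t := by
  refine Finset.sum_le_sum fun i _ => ENNReal.ofReal_le_ofReal (Real.sqrt_le_sqrt ?_)
  rw [hfst, hfst]
  gcongr
  exact hsnd _ _

lemma wLength_le_wLength_of_dist_snd_le (f : B → ℝ) {γ : ℝ → B × F} {δ : ℝ → B × F'}
    (hfst : ∀ u, (δ u).1 = (γ u).1) (hsnd : ∀ u v, dist (δ u).2 (δ v).2 ≤ dist (γ u).2 (γ v).2)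
    (a b : ℝ) : wLength f δ a b ≤ wLength f γ a b :=
  iSup_mono fun _ => iSup_mono fun t => iSup_mono fun _ => iSup_mono fun _ =>
    iSup_mono fun _ => wSum_le_wSum_of_dist_snd_le f hfst hsnd t

lemma Admissible.map_snd {γ : ℝ → B × F} {a b : ℝ} (hγ : Admissible γ a b) {K : ℝ≥0}
    {φ : F → F'} (hφ : LipschitzWith K φ) :
    Admissible (fun u => ((γ u).1, φ (γ u).2)) a b := by
  obtain ⟨hcont, hvar₁, hvar₂⟩ := hγ
  refine ⟨hcont.fst.prodMk (hφ.continuous.comp_continuousOn hcont.snd), hvar₁, ?_⟩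
  exact lt_top_iff_ne_top.2 <|
    hφ.comp_boundedVariationOn (g := fun u => (γ u).2) (lt_top_iff_ne_top.1 hvar₂)

lemma wDist_map_snd_le (f : B → ℝ) {φ : F → F'} (hφ : LipschitzWith 1 φ) (b b' : B) (u v : F) :
    wDist f (b, φ u) (b', φ v) ≤ wDist f (b, u) (b', v) := by
  refine le_iInf fun γ => le_iInf fun hγ => le_iInf fun h0 => le_iInf fun h1 => ?_
  let δ : ℝ → B × F' := fun r => ((γ r).1, φ (γ r).2)
  have hδ0 : δ 0 = (b, φ u) := by simp only [δ, h0]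
  have hδ1 : δ 1 = (b', φ v) := by simp only [δ, h1]
  have hsnd (r r' : ℝ) : dist (δ r).2 (δ r').2 ≤ dist (γ r).2 (γ r').2 := by
    simpa [δ] using hφ.dist_le_mul (γ r).2 (γ r').2
  calc wDist f (b, φ u) (b', φ v) ≤ wLength f δ 0 1 :=
        iInf₂_le_of_le δ (hγ.map_snd hφ) <| iInf₂_le_of_le hδ0 hδ1 le_rfl
    _ ≤ wLength f γ 0 1 :=
        wLength_le_wLength_of_dist_snd_le f (γ := γ) (δ := δ) (fun _ => rfl) hsnd 0 1

end WarpedProduct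

lemma GeodesicMS.exists_lipschitzWith_one {F : Type*} [MetricSpace F] (hF : GeodesicMS F)
    (x y : F) : ∃ φ : ℝ → F, LipschitzWith 1 φ ∧ φ 0 = x ∧ φ (dist x y) = y := by
  rcases eq_or_ne x y with rfl | hxy
  · exact ⟨fun _ => x, LipschitzWith.const' x, rfl, rfl⟩
  obtain ⟨c, hc0, hc1, hc⟩ := hF x y
  have hd : 0 < dist x y := dist_pos.2 hxy
  refine ⟨fun r => c (r / dist x y), LipschitzWith.of_dist_le_mul fun r r' => ?_,
    by simpa using hc0, by simpa [hd.ne'] using hc1⟩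
  rw [hc, ← sub_div, abs_div, abs_of_pos hd, div_mul_cancel₀ _ hd.ne', Real.dist_eq,
    NNReal.coe_one, one_mul]

/-- The parabolic cone distance formula: for a strictly intrinsic metric space `F`,
the distance in `ℝ ×_{eˣ} F` between `(s,x)` and `(t,y)` equals the distance in the
hyperbolic plane `ℍ² ≅ ℝ ×_{eˣ} ℝ` between `(s,0)` and `(t, d_F(x,y))`. -/
theorem parabolic_cone_distance
    {F : Type*} [MetricSpace F] (hF : GeodesicMS F)
    (s t : ℝ) (x y : F) :
    wDist (F := F) Real.exp (s, x) (t, y) =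
      wDist (F := ℝ) Real.exp (s, (0 : ℝ)) (t, dist x y) := by
  apply le_antisymm
  · obtain ⟨φ, hφ, hφ0, hφd⟩ := hF.exists_lipschitzWith_one x y
    simpa only [hφ0, hφd] using wDist_map_snd_le Real.exp hφ s t 0 (dist x y)
  · simpa only [dist_self] using wDist_map_snd_le Real.exp (LipschitzWith.dist_right x) s t x y
end
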